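/- arXiv:1703.03856 — 5 statements merged into one kernel-verified Lean document; each statement's English description precedes it below -/
import Mathlib

section
/- Let R be a commutative ring, let c : Fin k → Fin d → ℕ and q : Fin d → ℕ take values in {0,1}, and define the extended polynomial P_q := Σ_{i : Fin d} (∏_{j : Fin k} (X (Sum.inl j))^(c j i)) * (X (Sum.inr ()))^(q i) in MvPolynomial (Fin k ⊕ Unit) R. Let L be a list of pairwise distinct indices in Fin k such that for every i : Fin d, q i = 1 if and only if c j i = 1 for every j in L (the logical equivalence π_{j₁} ∧ ⋯ ∧ π_{j_ℓ} ⇔ π). Writing D_L for the composition of the partial derivatives pderiv (Sum.inl j) over j in L, we have (∏_{j ∈ L} X (Sum.inl j)) * D_L P_q = X (Sum.inr ()) * pderiv (Sum.inr ()) P_q. -/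
/-!
For distinct variables, `(∏_{j ∈ L} X j) ∘ ∂_L` equals the composite of the Euler operators
`X j ∘ ∂_j` over `j ∈ L`, because `∂_j` kills `X l` for `l ≠ j`. A monomial `X^m` is an
eigenvector of `X j ∘ ∂_j` with eigenvalue `m j`, so the left-hand side scales the `i`-th
monomial of `P_q` by `∏_{j ∈ L} c j i` and the right-hand side by `q i`; for 0/1 exponents
these two numbers agree exactly when `π_{j₁} ∧ ⋯ ∧ π_{j_ℓ} ⇔ π`.
-/

open MvPolynomial

lemma List.prod_map_eq_ite_of_le_one {ι : Type*} (L : List ι) (f : ι → ℕ)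
    (hf : ∀ j ∈ L, f j ≤ 1) :
    (L.map f).prod = if ∀ j ∈ L, f j = 1 then 1 else 0 := by
  induction L with
  | nil => simp
  | cons a L ih =>
    rw [List.forall_mem_cons] at hf
    rcases Nat.le_one_iff_eq_zero_or_eq_one.mp hf.1 with h | h <;> simp [h, ih hf.2]

namespace MvPolynomial

variable {R σ : Type*} [CommSemiring R]

lemma monomial_equivFunOnFinite_symm [Fintype σ] (e : σ → ℕ) :
    monomial (Finsupp.equivFunOnFinite.symm e) (1 : R) = ∏ s, X s ^ e s := by
  rw [monomial_eq, C_1, one_mul, Finsupp.prod_fintype _ _ (fun _ => pow_zero _)]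
  rfl

lemma foldr_X_mul_pderiv_monomial (L : List σ) (m : σ →₀ ℕ) (a : R) :
    L.foldr (fun j p => X j * pderiv j p) (monomial m a) = (L.map m).prod • monomial m a := by
  induction L with
  | nil => simp
  | cons j L ih =>
    rw [List.foldr_cons, ih, map_nsmul, mul_smul_comm, X_mul_pderiv_monomial, smul_smul,
      List.map_cons, List.prod_cons, mul_comm]

lemma foldr_X_mul_pderiv_sum {ι : Type*} (L : List σ) (s : Finset ι)
    (f : ι → MvPolynomial σ R) :
    L.foldr (fun j p => X j * pderiv j p) (∑ i ∈ s, f i) =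
      ∑ i ∈ s, L.foldr (fun j p => X j * pderiv j p) (f i) := by
  induction L with
  | nil => rfl
  | cons j L ih => rw [List.foldr_cons, ih, map_sum, Finset.mul_sum]; rfl

lemma pderiv_prod_X_of_notMem (L : List σ) {j : σ} (hj : j ∉ L) :
    pderiv j (L.map X).prod = (0 : MvPolynomial σ R) := by
  induction L with
  | nil => simp
  | cons l L ih =>
    rw [List.mem_cons, not_or] at hj
    rw [List.map_cons, List.prod_cons, pderiv_mul, pderiv_X_of_ne (Ne.symm hj.1), ih hj.2]
    simp

lemma prod_X_mul_foldr_pderiv (L : List σ) (hL : L.Nodup) (p : MvPolynomial σ R) :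
    (L.map X).prod * L.foldr (fun j p => pderiv j p) p =
      L.foldr (fun j p => X j * pderiv j p) p := by
  induction L with
  | nil => simp
  | cons j L ih =>
    obtain ⟨hj, hL⟩ := List.nodup_cons.mp hL
    rw [List.foldr_cons, List.foldr_cons, ← ih hL, pderiv_mul, pderiv_prod_X_of_notMem L hj,
      zero_mul, zero_add, List.map_cons, List.prod_cons, mul_assoc]

end MvPolynomial

/-- Lemma (query derivative), part (2): if the logical equivalence
`π_{j₁} ∧ ⋯ ∧ π_{j_ℓ} ⇔ π` holds, then
`α_{j₁}⋯α_{j_ℓ} ∂^ℓ P_q / ∂α_{j₁}⋯∂α_{j_ℓ} = β ∂P_q/∂β`. -/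
theorem stmt_6 (R : Type*) [CommRing R] (k d : ℕ)
    (c : Fin k → Fin d → ℕ) (hc : ∀ (j : Fin k) (i : Fin d), c j i ≤ 1)
    (q : Fin d → ℕ) (hq : ∀ i : Fin d, q i ≤ 1)
    (Pq : MvPolynomial (Fin k ⊕ Unit) R)
    (hPq : Pq = ∑ i : Fin d,
        (∏ j : Fin k, (X (Sum.inl j) : MvPolynomial (Fin k ⊕ Unit) R) ^ (c j i)) *
          (X (Sum.inr ()) : MvPolynomial (Fin k ⊕ Unit) R) ^ (q i))
    (L : List (Fin k)) (hL : L.Nodup)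
    (hiff : ∀ i : Fin d, q i = 1 ↔ ∀ j ∈ L, c j i = 1) :
    (L.map (fun j => (X (Sum.inl j) : MvPolynomial (Fin k ⊕ Unit) R))).prod *
        (L.foldr (fun j p => pderiv (Sum.inl j) p) Pq) =
      (X (Sum.inr ()) : MvPolynomial (Fin k ⊕ Unit) R) * pderiv (Sum.inr ()) Pq := by
  set m : Fin d → (Fin k ⊕ Unit →₀ ℕ) := fun i =>
    Finsupp.equivFunOnFinite.symm (Sum.elim (c · i) fun _ => q i)
  have hPq_monomial : Pq = ∑ i, monomial (m i) (1 : R) := by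
    simp only [hPq, m, monomial_equivFunOnFinite_symm, Fintype.prod_sum_type, Sum.elim_inl,
      Sum.elim_inr, Fintype.prod_unique]
  have hprod : ∀ i, (L.map (c · i)).prod = q i := by
    intro i
    rw [List.prod_map_eq_ite_of_le_one L _ (fun j _ => hc j i)]
    split_ifs with h
    · exact ((hiff i).mpr h).symm
    · have := hq i
      have := mt (hiff i).mp h
      omega
  calc _ = (L.map Sum.inl).foldr (fun j p => X j * pderiv j p) Pq := by
          rw [← prod_X_mul_foldr_pderiv _ (hL.map Sum.inl_injective), List.map_map,
            List.foldr_map]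
          rfl
    _ = ∑ i, q i • monomial (m i) 1 := by
          simp only [hPq_monomial, foldr_X_mul_pderiv_sum, foldr_X_mul_pderiv_monomial,
            List.map_map]
          simp [m, Function.comp_def, hprod]
    _ = X (Sum.inr ()) * pderiv (Sum.inr ()) Pq := by
          simp only [hPq_monomial, map_sum, Finset.mul_sum, X_mul_pderiv_monomial]
          simp [m]
end

section
/- Fix m attributes with nonempty finite domains D a for a : Fin m, the tuple space Tup := Π (a : Fin m), D a, weights x : Π (a : Fin m), D a → ℝ, a multiplier y : Tup → ℝ, tuple weights w t := (∏_a x a (t a)) · y t, and P := Σ_{t : Tup} w t. Assume n ≥ 1 and P ≠ 0, and let Pr(f) := (∏_{s : Fin n} w (f s)) / P^n for instances f : Fin n → Tup. For finite subsets T a ⊆ D a, one per attribute a, the expected number of rows satisfying the conjunctive range predicate, Σ_{f : Fin n → Tup} Pr(f) · |{s : Fin n | ∀ a, f s a ∈ T a}|, equals the sum over all points v in the product set Π_a T a of (n / P) · w v; i.e., the expected answer to a conjunctive range query is the sum of the expected answers of the point queries contained in its range. -/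
/-- The expected answer to a conjunctive range query is the sum of the expected
answers `(n / P) · w v` of the point queries `v` contained in its range. -/
theorem stmt_8 (m n : ℕ) (hn : 1 ≤ n) (D : Fin m → Type*)
    [∀ a, Fintype (D a)] [∀ a, DecidableEq (D a)] [∀ a, Nonempty (D a)]
    (x : ∀ a : Fin m, D a → ℝ) (y : (∀ a : Fin m, D a) → ℝ)
    (w : (∀ a : Fin m, D a) → ℝ)
    (hw : ∀ t : ∀ a : Fin m, D a, w t = (∏ a : Fin m, x a (t a)) * y t)
    (P : ℝ) (hP : P = ∑ t : ∀ a : Fin m, D a, w t) (hP0 : P ≠ 0)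
    (T : ∀ a : Fin m, Finset (D a)) :
    ∑ f : Fin n → ∀ a : Fin m, D a,
        ((∏ s : Fin n, w (f s)) / P ^ n) *
          ((Finset.univ.filter (fun s : Fin n => ∀ a : Fin m, f s a ∈ T a)).card : ℝ) =
      ∑ v ∈ Fintype.piFinset T, ((n : ℝ) / P) * w v := by
  classical
  have _tup : True := trivial
  set Q : ℝ := ∑ v ∈ Fintype.piFinset T, w v with hQ
  -- rewrite card as a sum of indicators
  have hcard : ∀ f : Fin n → (∀ a : Fin m, D a),
      ((Finset.univ.filter (fun s : Fin n => ∀ a : Fin m, f s a ∈ T a)).card : ℝ)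
        = ∑ s : Fin n, (if ∀ a : Fin m, f s a ∈ T a then (1 : ℝ) else 0) := by
    intro f
    rw [Finset.card_filter]
    push_cast
    rfl
  calc
    ∑ f : Fin n → (∀ a : Fin m, D a), ((∏ s : Fin n, w (f s)) / P ^ n) *
          ((Finset.univ.filter (fun s : Fin n => ∀ a : Fin m, f s a ∈ T a)).card : ℝ)
      = ∑ s₀ : Fin n, ∑ f : Fin n → (∀ a : Fin m, D a),
          ((∏ s : Fin n, w (f s)) / P ^ n) *
            (if ∀ a : Fin m, f s₀ a ∈ T a then (1 : ℝ) else 0) := by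
        rw [Finset.sum_comm]
        refine Finset.sum_congr rfl fun f _ => ?_
        rw [hcard f, Finset.mul_sum]
    _ = ∑ s₀ : Fin n, Q * P ^ (n-1) / P ^ n := by
        refine Finset.sum_congr rfl fun s₀ _ => ?_
        have key : ∑ f : Fin n → (∀ a : Fin m, D a),
            (∏ s : Fin n, w (f s)) * (if ∀ a : Fin m, f s₀ a ∈ T a then (1 : ℝ) else 0)
            = Q * P ^ (n - 1) := by
          have h1 : ∀ f : Fin n → (∀ a : Fin m, D a),
              (∏ s : Fin n, w (f s)) * (if ∀ a : Fin m, f s₀ a ∈ T a then (1 : ℝ) else 0)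
              = ∏ s : Fin n, (fun s (t : ∀ a : Fin m, D a) =>
                  if s = s₀ then (if ∀ a : Fin m, t a ∈ T a then w t else 0) else w t) s (f s) := by
            intro f
            rw [← Finset.prod_erase_mul _ _ (Finset.mem_univ s₀),
                ← Finset.prod_erase_mul _ _ (Finset.mem_univ s₀)]
            have he : ∏ s ∈ Finset.univ.erase s₀,
                (if s = s₀ then (if ∀ a : Fin m, (f s) a ∈ T a then w (f s) else 0) else w (f s))
                = ∏ s ∈ Finset.univ.erase s₀, w (f s) :=
              Finset.prod_congr rfl (fun s hs => by simp [Finset.ne_of_mem_erase hs])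
            rw [he]
            simp only [if_pos rfl]
            by_cases h : ∀ a : Fin m, f s₀ a ∈ T a <;> simp [h, mul_assoc]
          have hfact := Finset.prod_univ_sum (fun _ : Fin n => (Finset.univ : Finset (∀ a : Fin m, D a)))
            (fun s (t : ∀ a : Fin m, D a) =>
              if s = s₀ then (if ∀ a : Fin m, t a ∈ T a then w t else 0) else w t)
          rw [Finset.sum_congr rfl fun f _ => h1 f, ← Fintype.piFinset_univ, ← hfact]
          rw [← Finset.prod_erase_mul _ _ (Finset.mem_univ s₀)]
          have h2 : ∑ t : (∀ a : Fin m, D a), (if s₀ = s₀ then (if ∀ a : Fin m, t a ∈ T a then w t else 0) else w t)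
              = Q := by
            simp only [if_true, hQ]
            rw [← Finset.sum_filter]
            exact Finset.sum_congr (by ext v; simp [Fintype.mem_piFinset]) fun _ _ => rfl
          have h3 : ∀ s ∈ Finset.univ.erase s₀,
              (∑ t : (∀ a : Fin m, D a), (if s = s₀ then (if ∀ a : Fin m, t a ∈ T a then w t else 0) else w t)) = P := by
            intro s hs
            simp only [Finset.mem_erase] at hs
            simp [hs.1, hP]
          rw [Finset.prod_congr rfl h3, h2, Finset.prod_const]
          rw [Finset.card_erase_of_mem (Finset.mem_univ s₀), Finset.card_univ, Fintype.card_fin]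
          ring
        calc ∑ f : Fin n → (∀ a : Fin m, D a), ((∏ s : Fin n, w (f s)) / P ^ n) *
              (if ∀ a : Fin m, f s₀ a ∈ T a then (1 : ℝ) else 0)
            = (∑ f : Fin n → (∀ a : Fin m, D a), (∏ s : Fin n, w (f s)) *
              (if ∀ a : Fin m, f s₀ a ∈ T a then (1 : ℝ) else 0)) / P ^ n := by
              rw [Finset.sum_div]
              exact Finset.sum_congr rfl fun f _ => by ring
          _ = Q * P ^ (n-1) / P ^ n := by rw [key]
    _ = ∑ v ∈ Fintype.piFinset T, ((n : ℝ) / P) * w v := by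
        rw [Finset.sum_const, Finset.card_univ, Fintype.card_fin, ← Finset.mul_sum, ← hQ]
        have : (n : ℕ) = (n - 1) + 1 := (Nat.succ_pred_eq_of_pos hn).symm
        rw [nsmul_eq_mul]
        rw [show P ^ n = P ^ (n - 1) * P by rw [← pow_succ, ← this]]
        field_simp
end

section
/- Fix m attributes with nonempty finite domains D a for a : Fin m, Tup := Π (a : Fin m), D a, weights x : Π (a : Fin m), D a → ℝ, a multiplier y : Tup → ℝ, tuple weights w t := (∏_a x a (t a)) · y t, and P := Σ_{t : Tup} w t. Assume n ≥ 1 and P ≠ 0, and let Pr(f) := (∏_{s : Fin n} w (f s)) / P^n for instances f : Fin n → Tup. For finite subsets T a ⊆ D a, one per attribute a, define x' by x' a v := if v ∈ T a then x a v else 0. Then Σ_{f : Fin n → Tup} Pr(f) · |{s : Fin n | ∀ a, f s a ∈ T a}| = (n / P) · Σ_{t : Tup} (∏_a x' a (t a)) · y t; i.e., the expected answer of a conjunctive range query equals n/P times the evaluation of the summary polynomial with all out-of-range one-dimensional variables set to 0. -/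
/-!
By linearity the expected count is a sum over positions `s` of the weight of the instances whose
`s`-th tuple lies in the range. Instance weights are products over positions, so this sum factors:
the `s`-th factor is the range-restricted sum `∑_{t ∈ T} w t` and every other factor is `P`,
giving `n · (∑_{t ∈ T} w t) · P^(n-1) / P^n`. Setting the out-of-range variables to `0` kills
exactly the monomials of the out-of-range tuples, so the summary evaluates to `∑_{t ∈ T} w t`.
-/

open Finset

section

variable {ι α R : Type*} [Fintype ι] [DecidableEq ι] [Fintype α] [CommSemiring R]

theorem sum_pi_prod_mul_apply (w g : α → R) (i : ι) :
    ∑ f : ι → α, (∏ s, w (f s)) * g (f i) =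
      (∑ t, w t * g t) * (∑ t, w t) ^ (Fintype.card ι - 1) := by
  calc ∑ f : ι → α, (∏ s, w (f s)) * g (f i)
      = ∑ f : ι → α, ∏ s, w (f s) * (if s = i then g (f s) else 1) :=
        sum_congr rfl fun f _ ↦ by rw [prod_mul_distrib, Fintype.prod_ite_eq']
    _ = ∏ s, ∑ t, w t * (if s = i then g t else 1) :=
        (Fintype.prod_sum fun s t ↦ w t * if s = i then g t else 1).symm
    _ = ∏ s, Function.update (fun _ ↦ ∑ t, w t) i (∑ t, w t * g t) s := by
        congr! 1 with s
        rcases eq_or_ne s i with rfl | hs <;> simp [*]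
    _ = _ := by simp [prod_update_of_mem, card_sdiff]

theorem sum_pi_prod_mul_card_filter (w : α → R) (p : α → Prop) [DecidablePred p] :
    ∑ f : ι → α, (∏ s, w (f s)) * #{s | p (f s)} =
      Fintype.card ι * (∑ t with p t, w t) * (∑ t, w t) ^ (Fintype.card ι - 1) := by
  calc ∑ f : ι → α, (∏ s, w (f s)) * #{s | p (f s)}
      = ∑ i, ∑ f : ι → α, (∏ s, w (f s)) * (if p (f i) then 1 else 0) := by
        simp only [card_filter, Nat.cast_sum, Nat.cast_ite, Nat.cast_one, Nat.cast_zero, mul_sum]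
        exact sum_comm
    _ = ∑ _i : ι, (∑ t, w t * (if p t then 1 else 0)) * (∑ t, w t) ^ (Fintype.card ι - 1) :=
        sum_congr rfl fun i _ ↦ sum_pi_prod_mul_apply w (fun t ↦ if p t then 1 else 0) i
    _ = _ := by simp only [mul_boole, ← sum_filter, sum_const, card_univ, nsmul_eq_mul, mul_assoc]
end

theorem stmt_11_general (m n : ℕ) (hn : 1 ≤ n) (D : Fin m → Type*)
    [∀ a, Fintype (D a)] [∀ a, DecidableEq (D a)]
    (x : ∀ a : Fin m, D a → ℝ) (y : (∀ a : Fin m, D a) → ℝ)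
    (w : (∀ a : Fin m, D a) → ℝ)
    (hw : ∀ t : ∀ a : Fin m, D a, w t = (∏ a : Fin m, x a (t a)) * y t)
    (P : ℝ) (hP : P = ∑ t : ∀ a : Fin m, D a, w t) (hP0 : P ≠ 0)
    (T : ∀ a : Fin m, Finset (D a))
    (x' : ∀ a : Fin m, D a → ℝ)
    (hx' : ∀ (a : Fin m) (v : D a), x' a v = if v ∈ T a then x a v else 0) :
    ∑ f : Fin n → ∀ a : Fin m, D a,
        ((∏ s : Fin n, w (f s)) / P ^ n) *
          ((Finset.univ.filter (fun s : Fin n => ∀ a : Fin m, f s a ∈ T a)).card : ℝ) =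
      ((n : ℝ) / P) * ∑ t : ∀ a : Fin m, D a, (∏ a : Fin m, x' a (t a)) * y t := by
  have h_restrict : ∑ t : ∀ a, D a, (∏ a, x' a (t a)) * y t = ∑ t with ∀ a, t a ∈ T a, w t := by
    simp only [hx', Fintype.prod_ite_zero, ite_mul, zero_mul, hw, sum_filter]
  obtain ⟨k, rfl⟩ := Nat.exists_eq_add_of_le' hn
  simp only [div_mul_eq_mul_div, ← sum_div]
  rw [sum_pi_prod_mul_card_filter w (fun t ↦ ∀ a, t a ∈ T a), ← hP, h_restrict]
  simp only [Fintype.card_fin, Nat.add_sub_cancel, pow_succ]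
  field_simp

/-- The expected answer of a conjunctive range query equals `n/P` times the
evaluation of the summary with all out-of-range one-dimensional variables set to 0. -/
theorem stmt_11 (m n : ℕ) (hn : 1 ≤ n) (D : Fin m → Type*)
    [∀ a, Fintype (D a)] [∀ a, DecidableEq (D a)] [∀ a, Nonempty (D a)]
    (x : ∀ a : Fin m, D a → ℝ) (y : (∀ a : Fin m, D a) → ℝ)
    (w : (∀ a : Fin m, D a) → ℝ)
    (hw : ∀ t : ∀ a : Fin m, D a, w t = (∏ a : Fin m, x a (t a)) * y t)
    (P : ℝ) (hP : P = ∑ t : ∀ a : Fin m, D a, w t) (hP0 : P ≠ 0)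
    (T : ∀ a : Fin m, Finset (D a))
    (x' : ∀ a : Fin m, D a → ℝ)
    (hx' : ∀ (a : Fin m) (v : D a), x' a v = if v ∈ T a then x a v else 0) :
    ∑ f : Fin n → ∀ a : Fin m, D a,
        ((∏ s : Fin n, w (f s)) / P ^ n) *
          ((Finset.univ.filter (fun s : Fin n => ∀ a : Fin m, f s a ∈ T a)).card : ℝ) =
      ((n : ℝ) / P) * ∑ t : ∀ a : Fin m, D a, (∏ a : Fin m, x' a (t a)) * y t :=
  stmt_11_general m n hn D x y w hw P hP hP0 T x' hx'
end

section
/- Let R be a commutative ring, fix m attributes with finite domains D a for a : Fin m, Tup := Π (a : Fin m), D a, one-dimensional variables x : Π (a : Fin m), D a → R, a finite type K of multi-dimensional statistics with per-attribute decidable membership predicates ρ j a ⊆ D a for j : K and a : Fin m, the conjunctive predicate π j t := ∀ a, t a ∈ ρ j a, multi-dimensional variables δ : K → R, and P := Σ_{t : Tup} (∏_a x a (t a)) · ∏ over those j : K with π j t of δ j. Then P = Σ over all finite subsets S ⊆ K of (∏_{j ∈ S} (δ j − 1)) · ∏_{a : Fin m} (Σ over those v ∈ D a with v ∈ ρ j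 a for all j ∈ S of x a v). -/
/-!
Writing `δ j = (δ j - 1) + 1` and expanding, the product of `δ` over the statistics satisfied by a
tuple `t` becomes a sum over all sets `S` of statistics that `t` satisfies simultaneously. Swapping
the sums over `t` and `S`, the tuples satisfying every statistic of `S` form a box (a product of
per-attribute sets), because each predicate is a conjunction over the attributes; so the sum of the
monomials `∏ a, x a (t a)` over that box factors as a product of one-dimensional sums.
-/

open Finset

namespace Finset

variable {ι R : Type*} [CommRing R]

theorem prod_filter_eq_sum_ite_prod_sub_one [Fintype ι] (p : ι → Prop) [DecidablePred p]
    (f : ι → R) :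
    ∏ i ∈ univ.filter p, f i =
      ∑ s : Finset ι, if ∀ i ∈ s, p i then ∏ i ∈ s, (f i - 1) else 0 := by
  calc ∏ i ∈ univ.filter p, f i = ∏ i ∈ univ.filter p, ((f i - 1) + 1) := by
        simp only [sub_add_cancel]
    _ = ∑ s ∈ (univ.filter p).powerset, ∏ i ∈ s, (f i - 1) := prod_add_one _
    _ = _ := by
        rw [← sum_filter]
        congr 1
        ext s
        simp [subset_iff]

theorem prod_univ_sum_filter [Fintype ι] [DecidableEq ι] {κ : ι → Type*} [∀ i, Fintype (κ i)]
    (p : ∀ i, κ i → Prop) [∀ i, DecidablePred (p i)] (f : ∀ i, κ i → R) :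
    ∏ i, ∑ k ∈ univ.filter (p i), f i k =
      ∑ g ∈ univ.filter (fun g : ∀ i, κ i => ∀ i, p i (g i)), ∏ i, f i (g i) := by
  rw [prod_univ_sum]
  congr 1
  ext g
  simp

end Finset

/-- The core inclusion–exclusion identity underlying the compression of the
MaxEnt data summary:
`∑_t (∏_a x a (t a)) · ∏_{j : π j t} δ j
  = ∑_{S ⊆ K} (∏_{j ∈ S} (δ j − 1)) · ∏_a (∑_{v : ∀ j ∈ S, v ∈ ρ j a} x a v)`. -/
theorem stmt_12 (R : Type*) [CommRing R] (m : ℕ) (D : Fin m → Type*)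
    [∀ a, Fintype (D a)] [∀ a, DecidableEq (D a)]
    (x : ∀ a : Fin m, D a → R)
    (K : Type*) [Fintype K] [DecidableEq K]
    (ρ : K → ∀ a : Fin m, Finset (D a)) (δ : K → R) :
    ∑ t : ∀ a : Fin m, D a,
        (∏ a : Fin m, x a (t a)) *
          ∏ j ∈ Finset.univ.filter (fun j : K => ∀ a : Fin m, t a ∈ ρ j a), δ j =
      ∑ S : Finset K,
        (∏ j ∈ S, (δ j - 1)) *
          ∏ a : Fin m,
            ∑ v ∈ Finset.univ.filter (fun v : D a => ∀ j ∈ S, v ∈ ρ j a), x a v := by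
  simp_rw [prod_filter_eq_sum_ite_prod_sub_one, mul_sum, mul_ite, mul_zero]
  rw [sum_comm]
  refine sum_congr rfl fun S _ => ?_
  rw [prod_univ_sum_filter, mul_sum, sum_filter]
  refine sum_congr rfl fun t _ => ?_
  rw [mul_comm]
  congr 1
  exact propext ⟨fun h a j hj => h j hj a, fun h j hj a => h a j hj⟩
end

section
/- Let R be a commutative ring, fix m attributes with nonempty finite domains D a for a : Fin m, Tup := Π (a : Fin m), D a, one-dimensional variables x : Π (a : Fin m), D a → R, a finite type K of multi-dimensional statistics with per-attribute decidable membership predicates ρ j a ⊆ D a, the conjunctive predicate π j t := ∀ a, t a ∈ ρ j a, multi-dimensional variables δ : K → R, and P := Σ_{t : Tup} (∏_a x a (t a)) · ∏ over those j : K with π j t of δ j. For a finite subset S ⊆ K and attribute a, let R_{a,S} := {v ∈ D a | ∀ j ∈ S, v ∈ ρ j a}, and for a set of attributes 𝓘 ⊆ Fin m let J_𝓘 be the collection of finite subsets S ⊆ K such that (for every a, R_{a,S} ≠ D a if and only if a ∈ 𝓘) and R_{a,S} ≠ ∅ for every a. Then P = Σ over all 𝓘 ⊆ Fin m of (∏_{a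 ∉ 𝓘} Σ_{v ∈ D a} x a v) · (Σ_{S ∈ J_𝓘} (∏_{a ∈ 𝓘} Σ_{v ∈ R_{a,S}} x a v) · (∏_{j ∈ S} (δ j − 1))). -/
/-! Writing `δ j = 1 + (δ j - 1)`, the factor `∏_{j : π j t} δ j` becomes a sum over the sets
`S` of statistics satisfied by `t`. Exchanging the sums, the coefficient of `∏_{j ∈ S} (δ j - 1)`
is the sum of the monomials over the box `∏_a R_{a,S}`, which factors as
`∏_a ∑_{v ∈ R_{a,S}} x a v`. If some `R_{a,S}` is empty this vanishes; otherwise `S` lies in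
exactly one `J_𝓘`, namely for `𝓘` the set of attributes on which `R_{a,S}` is a proper subset,
and the remaining factors are full sums. -/

open Finset

section

variable {R : Type*} [CommRing R]

theorem Finset.prod_eq_sum_powerset_prod_sub_one {ι : Type*} (s : Finset ι) (f : ι → R) :
    ∏ i ∈ s, f i = ∑ t ∈ s.powerset, ∏ i ∈ t, (f i - 1) := by
  simpa using prod_add_one (f := fun i => f i - 1) s

theorem sum_mul_prod_filter_eq_sum_finset_prod_sub_one {T K : Type*} [Fintype T] [Fintype K]
    [DecidableEq K] (π : K → T → Prop) [∀ j t, Decidable (π j t)] (w : T → R) (δ : K → R) :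
    ∑ t, w t * ∏ j ∈ univ.filter (π · t), δ j =
      ∑ S : Finset K, (∑ t ∈ univ.filter (fun t => ∀ j ∈ S, π j t), w t) * ∏ j ∈ S, (δ j - 1) := by
  have hpowerset : ∀ t,
      (univ.filter (π · t)).powerset = univ.filter (fun S => ∀ j ∈ S, π j t) := fun t => by
    ext S
    simp [subset_iff]
  have hexpand : ∀ t, ∏ j ∈ univ.filter (π · t), δ j =
      ∑ S : Finset K, if ∀ j ∈ S, π j t then ∏ j ∈ S, (δ j - 1) else 0 := fun t => by
    rw [prod_eq_sum_powerset_prod_sub_one, hpowerset, sum_filter]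
  simp_rw [hexpand, mul_sum, sum_mul, sum_filter]
  rw [sum_comm]
  simp only [mul_ite, mul_zero]

variable {ι : Type*} [Fintype ι] [DecidableEq ι] {D : ι → Type*} [∀ a, Fintype (D a)]

theorem sum_filter_forall_mem_prod_eq_prod_sum [∀ a, DecidableEq (D a)] (r : ∀ a, Finset (D a))
    (x : ∀ a, D a → R) :
    ∑ t ∈ univ.filter (fun t : ∀ a, D a => ∀ a, t a ∈ r a), ∏ a, x a (t a) =
      ∏ a, ∑ v ∈ r a, x a v := by
  rw [prod_univ_sum]
  congr 1
  ext t
  simp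

theorem prod_sum_eq_prod_compl_mul_prod (r : ∀ a, Finset (D a)) (x : ∀ a, D a → R)
    {I : Finset ι} (hI : ∀ a ∉ I, r a = univ) :
    ∏ a, ∑ v ∈ r a, x a v = (∏ a ∈ Iᶜ, ∑ v, x a v) * ∏ a ∈ I, ∑ v ∈ r a, x a v := by
  rw [← prod_mul_prod_compl I, mul_comm]
  congr 1
  exact prod_congr rfl fun a ha => by rw [hI a (mem_compl.1 ha)]

theorem sum_filter_support_eq_prod_sum_mul [∀ a, DecidableEq (D a)] (r : ∀ a, Finset (D a))
    (x : ∀ a, D a → R) (c : R) :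
    ∑ I ∈ univ.filter (fun I : Finset ι => (∀ a, r a ≠ univ ↔ a ∈ I) ∧ ∀ a, r a ≠ ∅),
        (∏ a ∈ Iᶜ, ∑ v, x a v) * ((∏ a ∈ I, ∑ v ∈ r a, x a v) * c) =
      (∏ a, ∑ v ∈ r a, x a v) * c := by
  by_cases hne : ∀ a, r a ≠ ∅
  · have hsupport :
        univ.filter (fun I : Finset ι => (∀ a, r a ≠ univ ↔ a ∈ I) ∧ ∀ a, r a ≠ ∅) =
          {univ.filter (r · ≠ univ)} := by
      ext I
      simp only [mem_filter, mem_univ, true_and, mem_singleton]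
      constructor
      · rintro ⟨h, -⟩
        ext a
        simpa using (h a).symm
      · rintro rfl
        exact ⟨fun a => by simp, hne⟩
    rw [hsupport, sum_singleton, ← mul_assoc,
      ← prod_sum_eq_prod_compl_mul_prod r x (fun a ha => by simpa using ha)]
  · push Not at hne
    obtain ⟨a, ha⟩ := hne
    have hempty :
        univ.filter (fun I : Finset ι => (∀ a, r a ≠ univ ↔ a ∈ I) ∧ ∀ a, r a ≠ ∅) = ∅ := by
      ext I
      simp only [mem_filter, mem_univ, true_and, notMem_empty, iff_false, not_and]
      exact fun _ h => h a ha
    rw [hempty, sum_empty, prod_eq_zero (mem_univ a) (by simp [ha]), zero_mul]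

end

theorem stmt_13_general (R : Type*) [CommRing R] (m : ℕ) (D : Fin m → Type*)
    [∀ a, Fintype (D a)] [∀ a, DecidableEq (D a)]
    (x : ∀ a : Fin m, D a → R)
    (K : Type*) [Fintype K] [DecidableEq K]
    (ρ : K → ∀ a : Fin m, Finset (D a)) (δ : K → R) :
    ∑ t : ∀ a : Fin m, D a,
        (∏ a : Fin m, x a (t a)) *
          ∏ j ∈ Finset.univ.filter (fun j : K => ∀ a : Fin m, t a ∈ ρ j a), δ j =
      ∑ 𝓘 : Finset (Fin m),
        (∏ a ∈ 𝓘ᶜ, ∑ v : D a, x a v) *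
          ∑ S ∈ Finset.univ.filter (fun S : Finset K =>
              (∀ a : Fin m,
                  (Finset.univ.filter (fun v : D a => ∀ j ∈ S, v ∈ ρ j a) ≠
                      Finset.univ ↔ a ∈ 𝓘)) ∧
                ∀ a : Fin m,
                  Finset.univ.filter (fun v : D a => ∀ j ∈ S, v ∈ ρ j a) ≠ ∅),
            (∏ a ∈ 𝓘,
                ∑ v ∈ Finset.univ.filter (fun v : D a => ∀ j ∈ S, v ∈ ρ j a), x a v) *
              ∏ j ∈ S, (δ j - 1) := by
  refine (sum_mul_prod_filter_eq_sum_finset_prod_sub_one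
    (fun j (t : ∀ a, D a) => ∀ a, t a ∈ ρ j a) _ δ).trans ?_
  simp_rw [mul_sum]
  rw [sum_comm' (t' := univ) (s' := fun S => univ.filter fun 𝓘 : Finset (Fin m) =>
    (∀ a, univ.filter (fun v : D a => ∀ j ∈ S, v ∈ ρ j a) ≠ univ ↔ a ∈ 𝓘) ∧
      ∀ a, univ.filter (fun v : D a => ∀ j ∈ S, v ∈ ρ j a) ≠ ∅) (by simp)]
  refine sum_congr rfl fun S _ => ?_
  -- `convert` reconciles `Nat.decidableForallFin` with the lemma's generic `Decidable (∀ a, _)`.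
  convert (sum_filter_support_eq_prod_sum_mul
    (fun a => univ.filter fun v : D a => ∀ j ∈ S, v ∈ ρ j a) x (∏ j ∈ S, (δ j - 1))).symm using 3
  rw [← sum_filter_forall_mem_prod_eq_prod_sum]
  congr 1
  ext t
  simp only [mem_filter, mem_univ, true_and]
  exact ⟨fun h a j hj => h j hj a, fun h j hj a => h a j hj⟩

/-- The compression theorem for the MaxEnt data summary. With
`R_{a,S} := {v ∈ D a | ∀ j ∈ S, v ∈ ρ j a}` and
`J_𝓘 := {S ⊆ K | (∀ a, R_{a,S} ≠ D a ↔ a ∈ 𝓘) ∧ ∀ a, R_{a,S} ≠ ∅}`, we have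
`P = ∑_{𝓘 ⊆ Fin m} (∏_{a ∉ 𝓘} ∑_v x a v) ·
      (∑_{S ∈ J_𝓘} (∏_{a ∈ 𝓘} ∑_{v ∈ R_{a,S}} x a v) · ∏_{j ∈ S} (δ j − 1))`. -/
theorem stmt_13 (R : Type*) [CommRing R] (m : ℕ) (D : Fin m → Type*)
    [∀ a, Fintype (D a)] [∀ a, DecidableEq (D a)] [∀ a, Nonempty (D a)]
    (x : ∀ a : Fin m, D a → R)
    (K : Type*) [Fintype K] [DecidableEq K]
    (ρ : K → ∀ a : Fin m, Finset (D a)) (δ : K → R) :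
    ∑ t : ∀ a : Fin m, D a,
        (∏ a : Fin m, x a (t a)) *
          ∏ j ∈ Finset.univ.filter (fun j : K => ∀ a : Fin m, t a ∈ ρ j a), δ j =
      ∑ 𝓘 : Finset (Fin m),
        (∏ a ∈ 𝓘ᶜ, ∑ v : D a, x a v) *
          ∑ S ∈ Finset.univ.filter (fun S : Finset K =>
              (∀ a : Fin m,
                  (Finset.univ.filter (fun v : D a => ∀ j ∈ S, v ∈ ρ j a) ≠
                      Finset.univ ↔ a ∈ 𝓘)) ∧
                ∀ a : Fin m,
                  Finset.univ.filter (fun v : D a => ∀ j ∈ S, v ∈ ρ j a) ≠ ∅),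
            (∏ a ∈ 𝓘,
                ∑ v ∈ Finset.univ.filter (fun v : D a => ∀ j ∈ S, v ∈ ρ j a), x a v) *
              ∏ j ∈ S, (δ j - 1) :=
  stmt_13_general R m D x K ρ δ
end
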